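/- Let S be a P-polyhedral system and let i, j be incomparable multiindices (neither is an initial segment of the other). Then P_i ∩ P_j contains at most one point, and P_i ∩ P_j = S_i(V_P) ∩ S_j(V_P). -/

import Mathlib

open Set

/-- `S` is a `P`-polyhedral system with vertex set `V`: the maps are contraction
similarities, each `Pᵢ = Sᵢ(P)` lies in `P`, distinct `Pᵢ, Pⱼ` meet in at most one
point which is then a common vertex, and every vertex of `P` is a vertex of some
`Pᵢ`. -/
def IsPPolyhedralSystem {d : ℕ} {ι : Type*} (P : Set (EuclideanSpace ℝ (Fin d)))
    (V : Finset (EuclideanSpace ℝ (Fin d)))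
    (S : ι → EuclideanSpace ℝ (Fin d) → EuclideanSpace ℝ (Fin d)) : Prop :=
  (∀ i, ∃ r ∈ Set.Ioo (0 : ℝ) 1, ∀ x y, dist (S i x) (S i y) = r * dist x y) ∧
  (∀ i, S i '' P ⊆ P) ∧
  (∀ i j, i ≠ j → (S i '' P ∩ S j '' P = ∅ ∨
    ∃ v, S i '' P ∩ S j '' P = {v} ∧ v ∈ S i '' (V : Set (EuclideanSpace ℝ (Fin d))) ∧
      v ∈ S j '' (V : Set (EuclideanSpace ℝ (Fin d))))) ∧
  ((V : Set (EuclideanSpace ℝ (Fin d))) ⊆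
    ⋃ i, S i '' (V : Set (EuclideanSpace ℝ (Fin d))))

/-- The polyhedron data: `P` is a compact set homeomorphic to the closed `d`-ball, with
finite vertex set `V ⊆ P`. -/
def IsPolyhedronWithVertices {d : ℕ} (P : Set (EuclideanSpace ℝ (Fin d)))
    (V : Finset (EuclideanSpace ℝ (Fin d))) : Prop :=
  IsCompact P ∧ (V : Set (EuclideanSpace ℝ (Fin d))) ⊆ P ∧
    Nonempty (P ≃ₜ Metric.closedBall (0 : EuclideanSpace ℝ (Fin d)) 1)

/-- The composition `S_{j₁} ∘ ⋯ ∘ S_{jₙ}` associated to a multiindex `j`. -/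
def Sw {d : ℕ} {ι : Type*} (S : ι → EuclideanSpace ℝ (Fin d) → EuclideanSpace ℝ (Fin d)) :
    List ι → EuclideanSpace ℝ (Fin d) → EuclideanSpace ℝ (Fin d) :=
  fun l => l.foldr (fun i f => S i ∘ f) id

/-! Write incomparable multiindices as `i = c a i₁`, `j = c b j₁` with `a ≠ b`. As `S_c` is
injective, `P_i ∩ P_j = S_c (P_{a i₁} ∩ P_{b j₁})`, and `P_{a i₁} ∩ P_{b j₁} ⊆ P_a ∩ P_b` is
empty or a single common vertex `S_a w`, `w ∈ V`. Such a point lies in `S_a (P_{i₁})`, so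
`w ∈ V ∩ P_{i₁}`; and a vertex of `P` lying in `P_k` is a vertex of `P_k`, by induction on `k`:
a vertex of `P` is a vertex of some `P_t`, hence of `P_a` whenever it lies in `P_a`, because
`P_t ∩ P_a` consists of common vertices. -/

theorem List.exists_eq_append_cons_of_not_prefix {α : Type*} :
    ∀ {l₁ l₂ : List α}, ¬ l₁ <+: l₂ → ¬ l₂ <+: l₁ →
      ∃ c a b t₁ t₂, a ≠ b ∧ l₁ = c ++ a :: t₁ ∧ l₂ = c ++ b :: t₂
  | [], _, h, _ => absurd List.nil_prefix h
  | _ :: _, [], _, h => absurd List.nil_prefix h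
  | a :: l₁, b :: l₂, h₁, h₂ => by
    by_cases hab : a = b
    · subst hab
      obtain ⟨c, a', b', t₁, t₂, hne, rfl, rfl⟩ :=
        exists_eq_append_cons_of_not_prefix (l₁ := l₁) (l₂ := l₂)
          (fun h => h₁ (List.cons_prefix_cons.mpr ⟨rfl, h⟩))
          (fun h => h₂ (List.cons_prefix_cons.mpr ⟨rfl, h⟩))
      exact ⟨a :: c, a', b', t₁, t₂, hne, rfl, rfl⟩
    · exact ⟨[], a, b, l₁, l₂, hab, rfl, rfl⟩

section Sw

variable {d : ℕ} {ι : Type*} {S : ι → EuclideanSpace ℝ (Fin d) → EuclideanSpace ℝ (Fin d)}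

@[simp]
theorem Sw_cons (a : ι) (l : List ι) : Sw S (a :: l) = S a ∘ Sw S l := rfl

theorem Sw_append (l₁ l₂ : List ι) : Sw S (l₁ ++ l₂) = Sw S l₁ ∘ Sw S l₂ := by
  induction l₁ with
  | nil => rfl
  | cons a l₁ ih => rw [List.cons_append, Sw_cons, Sw_cons, ih, Function.comp_assoc]

theorem Sw_injective (hS : ∀ a, Function.Injective (S a)) (l : List ι) :
    Function.Injective (Sw S l) := by
  induction l with
  | nil => exact Function.injective_id
  | cons a l ih => exact (hS a).comp ih

theorem image_Sw_subset {P : Set (EuclideanSpace ℝ (Fin d))} (hS : ∀ a, S a '' P ⊆ P)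
    (l : List ι) : Sw S l '' P ⊆ P := by
  induction l with
  | nil => simp [Sw]
  | cons a l ih =>
    rw [Sw_cons, image_comp]
    exact (image_mono ih).trans (hS a)

end Sw

namespace IsPPolyhedralSystem

variable {d : ℕ} {ι : Type*} {P : Set (EuclideanSpace ℝ (Fin d))}
  {V : Finset (EuclideanSpace ℝ (Fin d))}
  {S : ι → EuclideanSpace ℝ (Fin d) → EuclideanSpace ℝ (Fin d)}

theorem injective (hS : IsPPolyhedralSystem P V S) (a : ι) : Function.Injective (S a) := by
  obtain ⟨r, ⟨hr, -⟩, hdist⟩ := hS.1 a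
  intro x y hxy
  have h := hdist x y
  rw [hxy, dist_self, eq_comm, mul_eq_zero] at h
  exact dist_eq_zero.mp (h.resolve_left hr.ne')

theorem image_inter_image_subsingleton (hS : IsPPolyhedralSystem P V S) {a b : ι}
    (hab : a ≠ b) : (S a '' P ∩ S b '' P).Subsingleton := by
  rcases hS.2.2.1 a b hab with h | ⟨v, h, -⟩ <;> rw [h]
  exacts [subsingleton_empty, subsingleton_singleton]

theorem image_inter_image_subset (hS : IsPPolyhedralSystem P V S) {a b : ι} (hab : a ≠ b) :
    S a '' P ∩ S b '' P ⊆ S a '' V := by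
  rcases hS.2.2.1 a b hab with h | ⟨v, h, hv, -⟩ <;> rw [h]
  exacts [empty_subset _, singleton_subset_iff.mpr hv]

theorem vertices_inter_image_subset (hS : IsPPolyhedralSystem P V S) (hVP : ↑V ⊆ P)
    (a : ι) : ↑V ∩ S a '' P ⊆ S a '' V := by
  rintro v ⟨hv, hvP⟩
  obtain ⟨t, hvt⟩ := mem_iUnion.mp (hS.2.2.2 hv)
  by_cases hta : t = a
  · exact hta ▸ hvt
  · exact hS.image_inter_image_subset (Ne.symm hta) ⟨hvP, image_mono hVP hvt⟩

theorem vertices_inter_image_Sw_subset (hS : IsPPolyhedralSystem P V S) (hVP : ↑V ⊆ P)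
    (k : List ι) : ↑V ∩ Sw S k '' P ⊆ Sw S k '' V := by
  induction k with
  | nil => simp [Sw]
  | cons a k ih =>
    have hvert : ↑V ∩ S a '' (Sw S k '' P) ⊆ S a '' V := fun v hv =>
      hS.vertices_inter_image_subset hVP a ⟨hv.1, image_mono (image_Sw_subset hS.2.1 k) hv.2⟩
    rw [Sw_cons, image_comp, image_comp]
    calc ↑V ∩ S a '' (Sw S k '' P) ⊆ S a '' V ∩ S a '' (Sw S k '' P) :=
          subset_inter hvert inter_subset_right
      _ = S a '' (↑V ∩ Sw S k '' P) := (image_inter (hS.injective a)).symm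
      _ ⊆ S a '' (Sw S k '' V) := image_mono ih

theorem image_Sw_cons_inter_subset (hS : IsPPolyhedralSystem P V S) (a b : ι)
    (k l : List ι) : Sw S (a :: k) '' P ∩ Sw S (b :: l) '' P ⊆ S a '' P ∩ S b '' P := by
  simp only [Sw_cons, image_comp]
  exact inter_subset_inter (image_mono (image_Sw_subset hS.2.1 k))
    (image_mono (image_Sw_subset hS.2.1 l))

theorem image_Sw_cons_inter_subset_vertices (hS : IsPPolyhedralSystem P V S) (hVP : ↑V ⊆ P)
    {a b : ι} (hab : a ≠ b) (k l : List ι) :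
    Sw S (a :: k) '' P ∩ Sw S (b :: l) '' P ⊆ Sw S (a :: k) '' V := by
  have hvert := (hS.image_Sw_cons_inter_subset a b k l).trans (hS.image_inter_image_subset hab)
  simp only [Sw_cons, image_comp] at hvert ⊢
  calc S a '' (Sw S k '' P) ∩ S b '' (Sw S l '' P) ⊆ S a '' V ∩ S a '' (Sw S k '' P) :=
        subset_inter hvert inter_subset_left
    _ = S a '' (↑V ∩ Sw S k '' P) := (image_inter (hS.injective a)).symm
    _ ⊆ S a '' (Sw S k '' V) := image_mono (hS.vertices_inter_image_Sw_subset hVP k)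

theorem image_Sw_cons_inter_eq (hS : IsPPolyhedralSystem P V S) (hVP : ↑V ⊆ P)
    {a b : ι} (hab : a ≠ b) (k l : List ι) :
    Sw S (a :: k) '' P ∩ Sw S (b :: l) '' P = Sw S (a :: k) '' V ∩ Sw S (b :: l) '' V := by
  refine Subset.antisymm (subset_inter (hS.image_Sw_cons_inter_subset_vertices hVP hab k l) ?_)
    (inter_subset_inter (image_mono hVP) (image_mono hVP))
  rw [inter_comm]
  exact hS.image_Sw_cons_inter_subset_vertices hVP hab.symm l k

end IsPPolyhedralSystem

/-- For incomparable multiindices `i, j`, the polyhedra `P_i` and `P_j` meet in at most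
one point, and their intersection equals the intersection of their vertex sets. -/
theorem stmt_9 {d m : ℕ} (P : Set (EuclideanSpace ℝ (Fin d)))
    (V : Finset (EuclideanSpace ℝ (Fin d)))
    (S : Fin m → EuclideanSpace ℝ (Fin d) → EuclideanSpace ℝ (Fin d))
    (hP : IsPolyhedronWithVertices P V)
    (hS : IsPPolyhedralSystem P V S)
    (i j : List (Fin m)) (hij : ¬ i <+: j ∧ ¬ j <+: i) :
    (Sw S i '' P ∩ Sw S j '' P).Subsingleton ∧
    Sw S i '' P ∩ Sw S j '' P =
      Sw S i '' (V : Set (EuclideanSpace ℝ (Fin d))) ∩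
        Sw S j '' (V : Set (EuclideanSpace ℝ (Fin d))) := by
  obtain ⟨c, a, b, i₁, j₁, hab, rfl, rfl⟩ :=
    List.exists_eq_append_cons_of_not_prefix hij.1 hij.2
  have hinj := Sw_injective hS.injective c
  simp only [Sw_append, image_comp]
  rw [← image_inter hinj, ← image_inter hinj]
  exact ⟨((hS.image_inter_image_subsingleton hab).anti
      (hS.image_Sw_cons_inter_subset a b i₁ j₁)).image _,
    by rw [hS.image_Sw_cons_inter_eq hP.2.1 hab]⟩
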